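/- In U(gl(2|1))[[t]]: [T, E₂] = (t/2)(T² + 1)E₃, [T', E₂] = −(t/2)(T'² + 1)E₃, [T, F₃] = −(t/2)(T² + 1)F₂, [T', F₃] = (t/2)(T'² + 1)F₂, and 2t·{F₂, E₃} = T − T' (equivalently {F₂, E₃} = (1/(2t))(T − T'); note T − T' = 2t e₁ so both sides are divisible by t). -/

import Mathlib

noncomputable section

namespace SuperJordanian

open scoped BigOperators

/-- The generalized binomial coefficient `C(1/2, n)`. -/
def cHalf (n : ℕ) : ℂ :=
  (∏ i ∈ Finset.range n, ((1 : ℂ) / 2 - (i : ℂ))) / (n.factorial : ℂ)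

/-- Parity for `gl(2|1)`: `p(i,j) = 1` iff exactly one of `i`, `j` equals the third index. -/
def par (i j : Fin 3) : ℕ :=
  if (i = 2 ∧ j ≠ 2) ∨ (i ≠ 2 ∧ j = 2) then 1 else 0

/-- The generator `e_{ij}` in the free algebra. -/
def gen (i j : Fin 3) : FreeAlgebra ℂ (Fin 3 × Fin 3) := FreeAlgebra.ι ℂ (i, j)

/-- Defining relations of the enveloping algebra `U(gl(2|1))`:
`e_{ij} e_{kl} - (-1)^{p(i,j)p(k,l)} e_{kl} e_{ij}
  = δ_{jk} e_{il} - (-1)^{p(i,j)p(k,l)} δ_{li} e_{kj}`. -/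
inductive Rel : FreeAlgebra ℂ (Fin 3 × Fin 3) → FreeAlgebra ℂ (Fin 3 × Fin 3) → Prop
  | mk (i j k l : Fin 3) :
      Rel (gen i j * gen k l - ((-1 : ℂ) ^ (par i j * par k l)) • (gen k l * gen i j))
        ((if j = k then gen i l else 0)
          - ((-1 : ℂ) ^ (par i j * par k l)) • (if l = i then gen k j else 0))

/-- The enveloping algebra `U = U(gl(2|1))`. -/
abbrev U : Type := RingQuot Rel

/-- The image of `e_{ij}` in `U`. -/
def e (i j : Fin 3) : U := RingQuot.mkAlgHom ℂ Rel (gen i j)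

/-- The formal power series ring `U[[t]]`. -/
abbrev V : Type := PowerSeries U

/-- The central formal variable `t`. -/
def tv : V := PowerSeries.X

/-- The inclusion `U → U[[t]]` as constant power series. -/
def C : U →+* V := PowerSeries.C (R := U)

def e₁ : U := e 0 1
def f₁ : U := e 1 0
def h₁ : U := e 0 0 - e 1 1
def e₂ : U := e 1 2
def f₂ : U := e 2 1
def h₂ : U := e 1 1 + e 2 2
def e₃ : U := e 0 2
def f₃ : U := e 2 0
def h₃ : U := h₁ + h₂

/-- `s = Σ_{n ≥ 0} C(1/2, n) t^{2n} e₁^{2n}`, so that `s² = 1 + t² e₁²`. -/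
def s : V := PowerSeries.mk fun m => if m % 2 = 0 then cHalf (m / 2) • (e₁ ^ m) else 0

def T : V := tv * C e₁ + s
def T' : V := -(tv * C e₁) + s
def H₁ : V := s * C h₁
def F₁ : V := C f₁ - ((1 : ℂ) / 4) • (tv ^ 2 * C (e₁ * (h₁ ^ 2 - 1)))
def H₂ : V := C h₂ - ((1 : ℂ) / 2) • (tv ^ 2 * C (e₁ ^ 2 * h₁))
def E₂ : V := C e₂ - ((1 : ℂ) / 4) • (tv ^ 2 * C (e₁ * e₃ * (2 * h₁ + 1)))
def F₂ : V := C f₂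
def H₃ : V := C h₃ + ((1 : ℂ) / 2) • (tv ^ 2 * C (e₁ ^ 2 * h₁))
def E₃ : V := C e₃
def F₃ : V := C f₃ + ((1 : ℂ) / 4) • (tv ^ 2 * C (e₁ * f₂ * (2 * h₁ + 1)))

/-- Commutator `[a, b] = ab - ba`. -/
def br (a b : V) : V := a * b - b * a

/-- Anticommutator `{a, b} = ab + ba`. -/
def ac (a b : V) : V := a * b + b * a

end SuperJordanian

/-!
The assignment `f ↦ f(t e₁)` is an algebra homomorphism `ℂ⟦X⟧ → U⟦t⟧`, and `T = g₊(t e₁)`,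
`T' = g₋(t e₁)` for `g± = σ ± X`, where `σ = √(1 + X²)` is the binomial series. If `[e₁, u]`
commutes with `e₁`, then `[f(t e₁), u] = t f'(t e₁) [e₁, u]`, as for a derivation. The `t²`
corrections in `E₂` and `F₃` are exactly what turns `[f(t e₁), E₂]` into
`t ((1 + X²) f')(t e₁) e₃`, and similarly for `F₃`. So the four bracket identities reduce to
`(1 + X²) g±' = ±(g±² + 1) / 2` in `ℂ⟦X⟧`, which comes from differentiating `σ² = 1 + X²`.
The last identity is just `{f₂, e₃} = e₁`.
-/

theorem Ring.choose_eq_prod_div {K : Type*} [Field K] [CharZero K] (a : K) (n : ℕ) :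
    Ring.choose a n = (∏ i ∈ Finset.range n, (a - i)) / n.factorial := by
  rw [Ring.choose_eq_smul, ← Polynomial.aeval_eq_smeval, ← Polynomial.eval_map_algebraMap,
    descPochhammer_map, descPochhammer_eval_eq_prod_range, smul_eq_mul, div_eq_inv_mul]

theorem commutator_mul_mul_two_mul_add_one {R : Type*} [Ring R] {a b h : R} (hb : Commute a b)
    (hh : a * h = h * a - 2 * a) :
    a * (a * b * (2 * h + 1)) + 4 * (a ^ 2 * b) = a * b * (2 * h + 1) * a := by
  linear_combination (norm := noncomm_ring) a * hb.eq * (2 * h + 1) + 2 * a * b * hh + 4 * a * hb.eq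

theorem pow_succ_mul_eq_of_mul_eq {A : Type*} [Semiring A] {a u v : A} (huv : a * u = u * a + v)
    (hv : Commute a v) (n : ℕ) :
    a ^ (n + 1) * u = u * a ^ (n + 1) + (n + 1) • (a ^ n * v) := by
  induction n with
  | zero => simpa using huv
  | succ n ih =>
    calc a ^ (n + 2) * u = a * (a ^ (n + 1) * u) := by rw [← mul_assoc, ← pow_succ']
      _ = (u * a + v) * a ^ (n + 1) + (n + 1) • (a ^ (n + 1) * v) := by
        rw [ih, mul_add, ← mul_assoc, huv, mul_smul_comm, ← mul_assoc, ← pow_succ']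
      _ = u * a ^ (n + 2) + (n + 2) • (a ^ (n + 1) * v) := by
        rw [add_mul, mul_assoc, ← pow_succ', (hv.pow_left (n + 1)).symm.eq, add_assoc,
          ← succ_nsmul']

namespace PowerSeries

section RescaleMap

variable {K : Type*} [CommSemiring K]

section Semiring

variable {A : Type*} [Semiring A] [Algebra K A]

/-- `f ↦ f(a X)`, for `a` in a possibly noncommutative `K`-algebra. -/
def rescaleMap (a : A) : K⟦X⟧ →ₐ[K] A⟦X⟧ where
  toFun f := mk fun n => coeff n f • a ^ n
  map_one' := by
    ext n
    rcases n with _ | n <;> simp [coeff_one]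
  map_mul' f g := by
    ext n
    simp only [coeff_mk, coeff_mul, Finset.sum_smul]
    refine Finset.sum_congr rfl fun ij hij => ?_
    rw [smul_mul_smul_comm, ← pow_add, Finset.HasAntidiagonal.mem_antidiagonal.mp hij]
  map_zero' := by ext; simp
  map_add' f g := by ext; simp [add_smul]
  commutes' r := by
    ext n
    rcases n with _ | n <;> simp [coeff_C, Algebra.algebraMap_eq_smul_one]

variable (a : A)

@[simp]
theorem coeff_rescaleMap (f : K⟦X⟧) (n : ℕ) :
    coeff n (rescaleMap a f) = coeff n f • a ^ n :=
  coeff_mk n fun n => coeff n f • a ^ n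

theorem rescaleMap_X : rescaleMap a (X : K⟦X⟧) = X * C a := by
  ext n
  rcases n with _ | _ | n <;> simp [coeff_X]

theorem rescaleMap_mul_C {u v : A} (huv : a * u = u * a + v) (hv : Commute a v)
    (f : K⟦X⟧) :
    rescaleMap a f * C u = C u * rescaleMap a f + X * (rescaleMap a (d⁄dX K f) * C v) := by
  ext n
  rcases n with _ | n
  · simp only [map_add, coeff_mul_C, coeff_C_mul, coeff_zero_X_mul, coeff_rescaleMap, pow_zero,
      add_zero, smul_one_mul, mul_smul_one]
  · simp only [map_add, coeff_mul_C, coeff_C_mul, coeff_succ_X_mul, coeff_rescaleMap,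
      coeff_derivative, smul_mul_assoc, pow_succ_mul_eq_of_mul_eq huv hv, smul_add,
      mul_smul_comm]
    rw [← Nat.cast_smul_eq_nsmul K, smul_smul]
    push_cast
    rfl

end Semiring

section Ring

variable {A : Type*} [Ring A] [Algebra K A] (a : A) {u v q : A}

theorem rescaleMap_commutator_C_sub_X_sq_mul_C (huv : a * u = u * a + v)
    (hq : a * q + a ^ 2 * v = q * a) (hv : Commute a v) (f : K⟦X⟧) :
    rescaleMap a f * (C u - X ^ 2 * C q) - (C u - X ^ 2 * C q) * rescaleMap a f =
      X * (rescaleMap a (d⁄dX K f * (1 + X ^ 2)) * C v) := by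
  have hu := rescaleMap_mul_C a huv hv f
  have hq := rescaleMap_mul_C a (eq_add_neg_of_add_eq hq)
    ((Commute.self_pow a 2).mul_right hv).neg_right f
  have hX := (commute_X (rescaleMap a f)).eq
  have hX' := (commute_X (rescaleMap a (d⁄dX K f))).eq
  have hCa := (commute_X (C a)).eq
  rw [map_neg, map_mul, map_pow] at hq
  rw [map_mul, map_add, map_one, map_pow, rescaleMap_X]
  linear_combination (norm := noncomm_ring) hu - X ^ 2 * hq - (hX * X + X * hX) * C q
    - X * hX' * C a * X * C a * C v - X * X * rescaleMap a (d⁄dX K f) * hCa * C a * C v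
    - X * X * hX' * C a * C a * C v

theorem rescaleMap_commutator_C_add_X_sq_mul_C (huv : a * u + v = u * a)
    (hq : a * q + a ^ 2 * v = q * a) (hv : Commute a v) (f : K⟦X⟧) :
    rescaleMap a f * (C u + X ^ 2 * C q) - (C u + X ^ 2 * C q) * rescaleMap a f =
      -(X * (rescaleMap a (d⁄dX K f * (1 + X ^ 2)) * C v)) := by
  have huv' : a * -u = -u * a + v := by rw [mul_neg, neg_mul, ← huv]; abel
  rw [← rescaleMap_commutator_C_sub_X_sq_mul_C a huv' hq hv f, map_neg]
  noncomm_ring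

end Ring

end RescaleMap

section SqrtOneAddXSq

variable (K : Type*) [Field K] [CharZero K]

def sqrtOneAddXSq : K⟦X⟧ := expand 2 two_ne_zero (binomialSeries K (1 / 2 : K))

theorem coeff_sqrtOneAddXSq (n : ℕ) :
    coeff n (sqrtOneAddXSq K) = if 2 ∣ n then Ring.choose (1 / 2 : K) (n / 2) else 0 := by
  simp [sqrtOneAddXSq, coeff_expand]

theorem sqrtOneAddXSq_sq : sqrtOneAddXSq K ^ 2 = 1 + X ^ 2 := by
  rw [sqrtOneAddXSq, ← map_pow, sq, ← binomialSeries_add, add_halves, ← Nat.cast_one,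
    binomialSeries_nat]
  simp [expand_X]

variable {K}

theorem derivative_mul_one_add_X_sq {σ : K⟦X⟧} (hσ : σ ^ 2 = 1 + X ^ 2) {ε : K}
    (hε : ε ^ 2 = 1) :
    d⁄dX K (ε • X + σ) * (1 + X ^ 2) = (ε / 2) • ((ε • X + σ) ^ 2 + 1) := by
  have hσ' : σ * d⁄dX K σ = X := by
    have h := congrArg (d⁄dX K) hσ
    simp only [Derivation.leibniz_pow, Nat.add_one_sub_one, pow_one, smul_eq_mul, nsmul_eq_mul,
      Nat.cast_ofNat, map_add, Derivation.map_one_eq_zero, derivative_X, mul_one, zero_add,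
      mul_eq_mul_left_iff] at h
    refine h.resolve_right ?_
    rw [← map_ofNat C 2]
    exact (map_ne_zero_iff _ C_injective).mpr two_ne_zero
  have hε' : C ε ^ 2 = 1 := by rw [← map_pow, hε, map_one]
  have h2 : C (ε / 2) * 2 = C ε := by rw [← map_ofNat C 2, ← map_mul, div_mul_cancel₀ _ two_ne_zero]
  rw [map_add, Derivation.map_smul, derivative_X]
  simp only [smul_eq_C_mul, mul_one]
  linear_combination σ * hσ' - (d⁄dX K σ + C (ε / 2)) * hσ - (C (ε / 2) * X ^ 2 + X * σ) * hε'
    - (C ε * X * σ + 1 + X ^ 2) * h2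

end SqrtOneAddXSq

end PowerSeries

namespace SuperJordanian

open PowerSeries hiding C

theorem e_mul_sub_mul_of_par_eq_zero (i j k l : Fin 3) (hp : par i j * par k l = 0) :
    e i j * e k l - e k l * e i j =
      (if j = k then e i l else 0) - (if l = i then e k j else 0) := by
  have h := RingQuot.mkAlgHom_rel ℂ (Rel.mk i j k l)
  simp only [hp, pow_zero, one_smul] at h
  simpa [e, apply_ite (RingQuot.mkAlgHom ℂ Rel)] using h

theorem e_mul_add_mul_of_par_eq_one (i j k l : Fin 3) (hp : par i j * par k l = 1) :
    e i j * e k l + e k l * e i j =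
      (if j = k then e i l else 0) + (if l = i then e k j else 0) := by
  have h := RingQuot.mkAlgHom_rel ℂ (Rel.mk i j k l)
  simp only [hp, pow_one, neg_one_smul, sub_neg_eq_add] at h
  simpa [e, apply_ite (RingQuot.mkAlgHom ℂ Rel)] using h

theorem e₁_mul_e₂ : e₁ * e₂ = e₂ * e₁ + e₃ :=
  eq_add_of_sub_eq' (by simpa [e₁, e₂, e₃] using e_mul_sub_mul_of_par_eq_zero 0 1 1 2 (by decide))

theorem commute_e₁_e₃ : Commute e₁ e₃ :=
  sub_eq_zero.mp (by simpa [e₁, e₃] using e_mul_sub_mul_of_par_eq_zero 0 1 0 2 (by decide))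

theorem commute_e₁_f₂ : Commute e₁ f₂ :=
  sub_eq_zero.mp (by simpa [e₁, f₂] using e_mul_sub_mul_of_par_eq_zero 0 1 2 1 (by decide))

theorem e₁_mul_f₃ : e₁ * f₃ + f₂ = f₃ * e₁ := by
  have h : e₁ * f₃ - f₃ * e₁ = -f₂ := by
    simpa [e₁, f₂, f₃] using e_mul_sub_mul_of_par_eq_zero 0 1 2 0 (by decide)
  rw [← sub_eq_zero, add_sub_right_comm, h, neg_add_cancel]

theorem e₁_mul_h₁ : e₁ * h₁ = h₁ * e₁ - 2 * e₁ := by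
  have h1 : e 0 1 * e 0 0 - e 0 0 * e 0 1 = -e 0 1 := by
    simpa using e_mul_sub_mul_of_par_eq_zero 0 1 0 0 (by decide)
  have h2 : e 0 1 * e 1 1 - e 1 1 * e 0 1 = e 0 1 := by
    simpa using e_mul_sub_mul_of_par_eq_zero 0 1 1 1 (by decide)
  simp only [e₁, h₁]
  rw [mul_sub, sub_mul, eq_add_of_sub_eq' h1, eq_add_of_sub_eq' h2, two_mul]
  abel

theorem f₂_mul_e₃_add_e₃_mul_f₂ : f₂ * e₃ + e₃ * f₂ = e₁ := by
  simpa [e₁, f₂, e₃] using e_mul_add_mul_of_par_eq_one 2 1 0 2 (by decide)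

theorem e₁_mul_quarter_smul {b : U} (hb : Commute e₁ b) :
    e₁ * ((1 / 4 : ℂ) • (e₁ * b * (2 * h₁ + 1))) + e₁ ^ 2 * b =
      (1 / 4 : ℂ) • (e₁ * b * (2 * h₁ + 1)) * e₁ := by
  rw [smul_mul_assoc, ← commutator_mul_mul_two_mul_add_one hb e₁_mul_h₁, smul_add, mul_smul_comm,
    show (4 : U) * (e₁ ^ 2 * b) = (4 : ℂ) • (e₁ ^ 2 * b) by rw [Algebra.smul_def, map_ofNat],
    smul_smul]
  norm_num

theorem C_smul (c : ℂ) (y : U) : C (c • y) = c • C y := by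
  ext n
  simp [C, PowerSeries.coeff_C]

local notation "φ" => rescaleMap (K := ℂ) e₁

theorem s_eq : s = φ (sqrtOneAddXSq ℂ) := by
  ext m
  simp only [coeff_rescaleMap, coeff_sqrtOneAddXSq, s, coeff_mk, Nat.dvd_iff_mod_eq_zero]
  split_ifs <;> simp [cHalf, Ring.choose_eq_prod_div]

theorem rescaleMap_smul_X_add (c : ℂ) :
    φ (c • X + sqrtOneAddXSq ℂ) = c • (tv * C e₁) + s := by
  rw [map_add, map_smul, rescaleMap_X, s_eq]
  rfl

theorem T_eq : T = φ ((1 : ℂ) • X + sqrtOneAddXSq ℂ) := by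
  rw [rescaleMap_smul_X_add, one_smul]
  rfl

theorem T'_eq : T' = φ ((-1 : ℂ) • X + sqrtOneAddXSq ℂ) := by
  rw [rescaleMap_smul_X_add, neg_one_smul]
  rfl

theorem br_E₂ {g : ℂ⟦X⟧} {c : ℂ} (hg : d⁄dX ℂ g * (1 + X ^ 2) = c • (g ^ 2 + 1)) :
    br (φ g) E₂ = c • (tv * ((φ g ^ 2 + 1) * E₃)) := by
  have hE₂ : E₂ = C e₂ - X ^ 2 * C ((1 / 4 : ℂ) • (e₁ * e₃ * (2 * h₁ + 1))) := by
    rw [E₂, ← mul_smul_comm, ← C_smul]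
    rfl
  have h := rescaleMap_commutator_C_sub_X_sq_mul_C e₁ e₁_mul_e₂
    (e₁_mul_quarter_smul commute_e₁_e₃) commute_e₁_e₃ g
  rw [hg, map_smul φ, map_add φ, map_pow φ, map_one φ, smul_mul_assoc, mul_smul_comm] at h
  rw [hE₂]
  exact h

theorem br_F₃ {g : ℂ⟦X⟧} {c : ℂ} (hg : d⁄dX ℂ g * (1 + X ^ 2) = c • (g ^ 2 + 1)) :
    br (φ g) F₃ = -(c • (tv * ((φ g ^ 2 + 1) * F₂))) := by
  have hF₃ : F₃ = C f₃ + X ^ 2 * C ((1 / 4 : ℂ) • (e₁ * f₂ * (2 * h₁ + 1))) := by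
    rw [F₃, ← mul_smul_comm, ← C_smul]
    rfl
  have h := rescaleMap_commutator_C_add_X_sq_mul_C e₁ e₁_mul_f₃
    (e₁_mul_quarter_smul commute_e₁_f₂) commute_e₁_f₂ g
  rw [hg, map_smul φ, map_add φ, map_pow φ, map_one φ, smul_mul_assoc, mul_smul_comm] at h
  rw [hF₃]
  exact h

theorem ac_F₂_E₃ : ac F₂ E₃ = C e₁ := by
  rw [ac, F₂, E₃, ← map_mul, ← map_mul, ← map_add, f₂_mul_e₃_add_e₃_mul_f₂]

/-- commutators of `T`, `T'` with `E₂`, `F₃`, and `{F₂, E₃} = (1/(2t))(T - T')`. -/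
theorem statement7 :
    br T E₂ = ((1 : ℂ) / 2) • (tv * ((T ^ 2 + 1) * E₃)) ∧
    br T' E₂ = -(((1 : ℂ) / 2) • (tv * ((T' ^ 2 + 1) * E₃))) ∧
    br T F₃ = -(((1 : ℂ) / 2) • (tv * ((T ^ 2 + 1) * F₂))) ∧
    br T' F₃ = ((1 : ℂ) / 2) • (tv * ((T' ^ 2 + 1) * F₂)) ∧
    2 * tv * ac F₂ E₃ = T - T' := by
  have hσ := sqrtOneAddXSq_sq ℂ
  have hT := derivative_mul_one_add_X_sq hσ (one_pow 2)
  have hT' := derivative_mul_one_add_X_sq hσ (by norm_num : (-1 : ℂ) ^ 2 = 1)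
  refine ⟨?_, ?_, ?_, ?_, ?_⟩
  · rw [T_eq, br_E₂ hT]
  · rw [T'_eq, br_E₂ hT', neg_div, neg_smul]
  · rw [T_eq, br_F₃ hT]
  · rw [T'_eq, br_F₃ hT', neg_div, neg_smul, neg_neg]
  · rw [ac_F₂_E₃, T, T']
    noncomm_ring

end SuperJordanian
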